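/- Let p be a prime and k a field of characteristic p. Let B be the subgroup of GL₂(ℚ_p) consisting of invertible upper triangular matrices, regarded as a topological group with the topology induced from the p-adic topology on 2×2 matrices over ℚ_p. Let V be a k-vector space with a k-linear representation ρ of B that is smooth (every vector of V is fixed by some open subgroup of B) and admissible (for every compact open subgroup H of B, the subspace V^H of H-fixed vectors is finite-dimensional over k). Then the unipotent radical of B acts trivially on V: for every b ∈ ℚ_p, the matrix [[1, b], [0, 1]] acts as the identity on V. -/

import Mathlib

open Matrix

variable (p : ℕ) [Fact p.Prime]

/-- The Borel subgroup of upper triangular matrices in `GL₂(ℚ_p)`. -/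
def BorelGL2 : Subgroup (GL (Fin 2) ℚ_[p]) where
  carrier := {g | (g : Matrix (Fin 2) (Fin 2) ℚ_[p]) 1 0 = 0}
  one_mem' := by simp
  mul_mem' := by
    intro a b ha hb
    simp only [Set.mem_setOf_eq, Units.val_mul, Matrix.mul_apply, Fin.sum_univ_two] at *
    rw [ha, hb, zero_mul, mul_zero, add_zero]
  inv_mem' := by
    intro a ha
    simp only [Set.mem_setOf_eq] at *
    rw [Matrix.coe_units_inv, Matrix.inv_def, Matrix.adjugate_fin_two]
    simp [ha]

/-- The unipotent matrix `[[1, b], [0, 1]]` as an element of `GL₂(ℚ_p)`. -/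
noncomputable def unipotentGL2 (b : ℚ_[p]) : GL (Fin 2) ℚ_[p] where
  val := !![1, b; 0, 1]
  inv := !![1, -b; 0, 1]
  val_inv := by
    rw [Matrix.mul_fin_two, Matrix.one_fin_two]
    norm_num
  inv_val := by
    rw [Matrix.mul_fin_two, Matrix.one_fin_two]
    norm_num

lemma unipotentGL2_mem_Borel (b : ℚ_[p]) : unipotentGL2 p b ∈ BorelGL2 p := by
  show (!![(1:ℚ_[p]), b; 0, 1]) 1 0 = 0
  simp

/-- The subspace of vectors fixed by every element of a subgroup `H`. -/
def fixedVectors {k G V : Type*} [Field k] [Group G] [AddCommGroup V] [Module k V]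
    (ρ : Representation k G V) (H : Subgroup G) : Submodule k V where
  carrier := {v | ∀ g ∈ H, ρ g v = v}
  add_mem' := fun {a b} ha hb g hg => by rw [map_add, ha g hg, hb g hg]
  zero_mem' := fun g hg => by simp
  smul_mem' := fun c v hv g hg => by rw [_root_.map_smul, hv g hg]

/-
Smoothness fixes `v` under a congruence subgroup `Kₙ` of `B`, which is compact open, so `V^{Kₙ}`
is finite-dimensional by admissibility. Conjugation by `t = diag(pᵐ, 1)` maps `Kₙ` into itself,
so `ρ(t)⁻¹` maps `V^{Kₙ}` injectively, hence surjectively, into itself: `v = ρ(t)⁻¹ w` with `w`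
fixed by `Kₙ`. As `t u_b t⁻¹ = u_{pᵐ b}` lies in `Kₙ` for `m` large,
`ρ(u_b) v = ρ(t)⁻¹ ρ(u_{pᵐ b}) w = v`.
-/

open Metric Topology

section Ultrametric

variable {K : Type*} [NormedField K] {r : ℝ} {x y : K}

lemma mul_mem_ball_zero_of_norm_le_one (hx : ‖x‖ ≤ 1) (hy : y ∈ ball (0 : K) r) :
    x * y ∈ ball (0 : K) r := by
  rw [mem_ball_zero_iff, norm_mul] at *
  exact (mul_le_of_le_one_left (norm_nonneg y) hx).trans_lt hy

variable [IsUltrametricDist K]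

lemma norm_eq_one_of_mem_ball_one (hr : r ≤ 1) (hx : x ∈ ball (1 : K) r) : ‖x‖ = 1 := by
  have h : ‖x - 1‖ < ‖(1 : K)‖ := by
    rw [norm_one]; exact (mem_ball_iff_norm.1 hx).trans_le hr
  have h_max := IsUltrametricDist.norm_add_eq_max_of_norm_ne_norm h.ne
  rwa [sub_add_cancel, max_eq_right h.le, norm_one] at h_max

lemma mul_mem_ball_one (hr : r ≤ 1) (hx : x ∈ ball (1 : K) r) (hy : y ∈ ball (1 : K) r) :
    x * y ∈ ball (1 : K) r := by
  rw [mem_ball_iff_norm] at *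
  calc ‖x * y - 1‖ = ‖x * (y - 1) + (x - 1)‖ := by ring_nf
    _ ≤ max ‖x * (y - 1)‖ ‖x - 1‖ := IsUltrametricDist.norm_add_le_max _ _
    _ < r := by
      rw [norm_mul, norm_eq_one_of_mem_ball_one hr (mem_ball_iff_norm.2 hx), one_mul]
      exact max_lt hy hx

lemma ne_zero_of_mem_ball_one (hr : r ≤ 1) (hx : x ∈ ball (1 : K) r) : x ≠ 0 :=
  norm_ne_zero_iff.1 (by rw [norm_eq_one_of_mem_ball_one hr hx]; exact one_ne_zero)

lemma add_mem_ball_zero (hx : x ∈ ball (0 : K) r) (hy : y ∈ ball (0 : K) r) :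
    x + y ∈ ball (0 : K) r := by
  rw [mem_ball_zero_iff] at *
  exact (IsUltrametricDist.norm_add_le_max x y).trans_lt (max_lt hx hy)

lemma inv_mem_ball_one (hr : r ≤ 1) (hx : x ∈ ball (1 : K) r) : x⁻¹ ∈ ball (1 : K) r := by
  have hx₁ := norm_eq_one_of_mem_ball_one hr hx
  have hx₀ := ne_zero_of_mem_ball_one hr hx
  rw [mem_ball_iff_norm] at *
  calc ‖x⁻¹ - 1‖ = ‖x - 1‖ * ‖x⁻¹‖ := by
        rw [← norm_mul, sub_mul, mul_inv_cancel₀ hx₀, one_mul, norm_sub_rev]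
    _ < r := by rwa [norm_inv, hx₁, inv_one, mul_one]

lemma IsUltrametricDist.isCompact_ball {X : Type*} [PseudoMetricSpace X] [ProperSpace X]
    [IsUltrametricDist X] (x : X) (r : ℝ) : IsCompact (ball x r) :=
  (isCompact_closedBall x r).of_isClosed_subset (IsUltrametricDist.isClosed_ball x r)
    ball_subset_closedBall

end Ultrametric

section FixedVectors

variable {k G V : Type*} [Field k] [Group G] [AddCommGroup V] [Module k V]
  (ρ : Representation k G V) {K : Subgroup G} {s : G}

lemma Representation.apply_inv_apply_eq_inv_apply_conj (g : G) (w : V) :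
    ρ g (ρ s⁻¹ w) = ρ s⁻¹ (ρ (s * g * s⁻¹) w) := by
  simp only [← Module.End.mul_apply, ← map_mul]
  group

lemma apply_inv_mem_fixedVectors (hs : ∀ g ∈ K, s * g * s⁻¹ ∈ K) {w : V}
    (hw : w ∈ fixedVectors ρ K) : ρ s⁻¹ w ∈ fixedVectors ρ K := fun g hg => by
  rw [ρ.apply_inv_apply_eq_inv_apply_conj, hw _ (hs g hg)]

lemma fixedVectors_le_map_inv [FiniteDimensional k (fixedVectors ρ K)]
    (hs : ∀ g ∈ K, s * g * s⁻¹ ∈ K) :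
    fixedVectors ρ K ≤ (fixedVectors ρ K).map (ρ s⁻¹) := by
  let φ := (ρ s⁻¹).restrict fun w hw => apply_inv_mem_fixedVectors ρ hs hw
  have hφ : Function.Injective φ := fun w₁ w₂ h => Subtype.ext <| by
    simpa [φ] using congrArg (fun w : fixedVectors ρ K => ρ s (w : V)) h
  intro v hv
  obtain ⟨w, hw⟩ := LinearMap.surjective_of_injective hφ ⟨v, hv⟩
  exact ⟨w, w.2, congrArg Subtype.val hw⟩

theorem apply_eq_self_of_conj_mem [FiniteDimensional k (fixedVectors ρ K)]
    (hs : ∀ g ∈ K, s * g * s⁻¹ ∈ K) {u : G} (hu : s * u * s⁻¹ ∈ K) {v : V}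
    (hv : v ∈ fixedVectors ρ K) : ρ u v = v := by
  obtain ⟨w, hw, rfl⟩ := fixedVectors_le_map_inv ρ hs hv
  rw [ρ.apply_inv_apply_eq_inv_apply_conj, hw _ hu]

end FixedVectors

theorem Matrix.GeneralLinearGroup.isEmbedding_val {n K : Type*} [Fintype n] [DecidableEq n]
    [Field K] [TopologicalSpace K] [IsTopologicalDivisionRing K] :
    IsEmbedding (Units.val : GL n K → Matrix n n K) :=
  Units.isEmbedding_val_mk' (f := Inv.inv)
    (fun A hA => (continuousAt_matrix_inv A <| by
      rw [Ring.inverse_eq_inv']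
      exact continuousAt_inv₀ ((Matrix.isUnit_iff_isUnit_det A).1 hA).ne_zero).continuousWithinAt)
    (fun u => (Matrix.coe_units_inv u).symm)

namespace BorelGL2

variable {p}

lemma norm_p_pow_pos {n : ℕ} : 0 < ‖(p : ℚ_[p]) ^ n‖ :=
  norm_pos_iff.2 (pow_ne_zero _ (NeZero.ne _))

lemma norm_p_pow_le_one {n : ℕ} : ‖(p : ℚ_[p]) ^ n‖ ≤ 1 := by
  rw [norm_pow]
  exact pow_le_one₀ (norm_nonneg _) Padic.norm_p_lt_one.le

def coords (g : BorelGL2 p) : ℚ_[p] × ℚ_[p] × ℚ_[p] :=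
  ((g : GL (Fin 2) ℚ_[p]) 0 0, (g : GL (Fin 2) ℚ_[p]) 0 1, (g : GL (Fin 2) ℚ_[p]) 1 1)

lemma coe_eq_coords (g : BorelGL2 p) :
    ((g : GL (Fin 2) ℚ_[p]) : Matrix (Fin 2) (Fin 2) ℚ_[p]) =
      !![(coords g).1, (coords g).2.1; 0, (coords g).2.2] := by
  rw [← g.2.out]
  exact Matrix.eta_fin_two _

lemma coords_diag_ne_zero (g : BorelGL2 p) : (coords g).1 ≠ 0 ∧ (coords g).2.2 ≠ 0 := by
  have h := (Matrix.GeneralLinearGroup.det (g : GL (Fin 2) ℚ_[p])).ne_zero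
  rw [Matrix.GeneralLinearGroup.val_det_apply, coe_eq_coords, Matrix.det_fin_two_of] at h
  simpa using h

lemma coords_mul (g h : BorelGL2 p) :
    coords (g * h) = ((coords g).1 * (coords h).1,
      (coords g).1 * (coords h).2.1 + (coords g).2.1 * (coords h).2.2,
      (coords g).2.2 * (coords h).2.2) := by
  have hgh : ((g * h : BorelGL2 p) : GL (Fin 2) ℚ_[p]).val =
      (g : GL (Fin 2) ℚ_[p]).val * (h : GL (Fin 2) ℚ_[p]).val := rfl
  rw [coe_eq_coords, coe_eq_coords g, coe_eq_coords h, Matrix.mul_fin_two] at hgh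
  simpa using congrArg (fun A : Matrix (Fin 2) (Fin 2) ℚ_[p] => (A 0 0, A 0 1, A 1 1)) hgh

lemma coords_inv (g : BorelGL2 p) :
    coords g⁻¹ = ((coords g).1⁻¹, -((coords g).2.1 * (coords g).1⁻¹ * (coords g).2.2⁻¹),
      (coords g).2.2⁻¹) := by
  obtain ⟨ha, hd⟩ := coords_diag_ne_zero g
  have hinv : ((g⁻¹ : BorelGL2 p) : GL (Fin 2) ℚ_[p]).val = (g : GL (Fin 2) ℚ_[p]).val⁻¹ :=
    Matrix.coe_units_inv _
  rw [coe_eq_coords, coe_eq_coords g, Matrix.inv_def, Matrix.adjugate_fin_two_of,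
    Matrix.det_fin_two_of] at hinv
  have h := congrArg (fun A : Matrix (Fin 2) (Fin 2) ℚ_[p] => (A 0 0, A 0 1, A 1 1)) hinv
  simp only [Fin.isValue, of_apply, cons_val', cons_val_zero, cons_val_fin_one, cons_val_one,
    Prod.mk.eta, mul_zero, sub_zero, Ring.inverse_eq_inv', _root_.mul_inv_rev, neg_zero,
    Matrix.smul_apply, smul_eq_mul, mul_neg] at h
  rw [h]
  field_simp

@[simp]
lemma coords_one : coords (1 : BorelGL2 p) = (1, 0, 1) := by
  simp [coords]

noncomputable def mk (a b d : ℚ_[p]) (ha : a ≠ 0) (hd : d ≠ 0) : BorelGL2 p :=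
  ⟨Matrix.GeneralLinearGroup.mkOfDetNeZero !![a, b; 0, d] (by simp [ha, hd]), rfl⟩

@[simp]
lemma coords_mk (a b d : ℚ_[p]) (ha : a ≠ 0) (hd : d ≠ 0) : coords (mk a b d ha hd) = (a, b, d) :=
  rfl

lemma coords_unipotent (b : ℚ_[p]) :
    coords ⟨unipotentGL2 p b, unipotentGL2_mem_Borel p b⟩ = (1, b, 1) :=
  rfl

lemma coords_conj_diag (a : ℚ_[p]) (ha : a ≠ 0) (g : BorelGL2 p) :
    coords (mk a 0 1 ha one_ne_zero * g * (mk a 0 1 ha one_ne_zero)⁻¹) =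
      ((coords g).1, a * (coords g).2.1, (coords g).2.2) := by
  simp only [coords_mul, coords_mk, zero_mul, add_zero, one_mul, coords_inv, inv_one, mul_one,
    neg_zero, mul_zero, zero_add, Prod.mk.injEq, and_true]
  field_simp

lemma continuous_coords : Continuous (coords (p := p)) := by
  unfold coords
  fun_prop

lemma isInducing_coords : IsInducing (coords (p := p)) := by
  have hval : IsInducing fun g : BorelGL2 p =>
      ((g : GL (Fin 2) ℚ_[p]) : Matrix (Fin 2) (Fin 2) ℚ_[p]) :=
    Matrix.GeneralLinearGroup.isEmbedding_val.isInducing.comp IsInducing.subtypeVal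
  refine IsInducing.of_comp continuous_coords
    (g := fun x : ℚ_[p] × ℚ_[p] × ℚ_[p] => !![x.1, x.2.1; 0, x.2.2]) (by fun_prop) ?_
  convert hval using 1
  funext g
  exact (coe_eq_coords g).symm

variable (p) in
def congruenceSubgroup (n : ℕ) : Subgroup (BorelGL2 p) where
  carrier := coords ⁻¹'
    (ball 1 ‖(p : ℚ_[p]) ^ n‖ ×ˢ ball 0 ‖(p : ℚ_[p]) ^ n‖ ×ˢ ball 1 ‖(p : ℚ_[p]) ^ n‖)
  one_mem' := by simpa using norm_p_pow_pos (p := p) (n := n)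
  mul_mem' := by
    rintro g h ⟨hg₁, hg₂, hg₃⟩ ⟨hh₁, hh₂, hh₃⟩
    rw [Set.mem_preimage, coords_mul]
    refine ⟨mul_mem_ball_one norm_p_pow_le_one hg₁ hh₁,
      add_mem_ball_zero ?_ ?_, mul_mem_ball_one norm_p_pow_le_one hg₃ hh₃⟩
    · exact mul_mem_ball_zero_of_norm_le_one
        (norm_eq_one_of_mem_ball_one norm_p_pow_le_one hg₁).le hh₂
    · rw [mul_comm]
      exact mul_mem_ball_zero_of_norm_le_one
        (norm_eq_one_of_mem_ball_one norm_p_pow_le_one hh₃).le hg₂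
  inv_mem' := by
    rintro g ⟨hg₁, hg₂, hg₃⟩
    rw [Set.mem_preimage, coords_inv]
    refine ⟨inv_mem_ball_one norm_p_pow_le_one hg₁, ?_, inv_mem_ball_one norm_p_pow_le_one hg₃⟩
    rw [mem_ball_zero_iff, norm_neg, norm_mul, norm_mul, norm_inv, norm_inv,
      norm_eq_one_of_mem_ball_one norm_p_pow_le_one hg₁,
      norm_eq_one_of_mem_ball_one norm_p_pow_le_one hg₃, inv_one, mul_one, mul_one]
    exact mem_ball_zero_iff.1 hg₂

lemma mem_congruenceSubgroup {n : ℕ} {g : BorelGL2 p} : g ∈ congruenceSubgroup p n ↔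
    coords g ∈ ball 1 ‖(p : ℚ_[p]) ^ n‖ ×ˢ ball 0 ‖(p : ℚ_[p]) ^ n‖ ×ˢ ball 1 ‖(p : ℚ_[p]) ^ n‖ :=
  Iff.rfl

lemma isOpen_congruenceSubgroup (n : ℕ) : IsOpen (congruenceSubgroup p n : Set (BorelGL2 p)) :=
  (isOpen_ball.prod (isOpen_ball.prod isOpen_ball)).preimage continuous_coords

lemma isCompact_congruenceSubgroup (n : ℕ) :
    IsCompact (congruenceSubgroup p n : Set (BorelGL2 p)) := by
  rw [isInducing_coords.isCompact_iff]
  change IsCompact (coords '' (coords ⁻¹' (ball _ _ ×ˢ ball _ _ ×ˢ ball _ _)))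
  rw [Set.image_preimage_eq_of_subset]
  · exact (IsUltrametricDist.isCompact_ball _ _).prod
      ((IsUltrametricDist.isCompact_ball _ _).prod (IsUltrametricDist.isCompact_ball _ _))
  · rintro ⟨a, b, d⟩ ⟨ha, -, hd⟩
    have ha₀ := ne_zero_of_mem_ball_one norm_p_pow_le_one ha
    have hd₀ := ne_zero_of_mem_ball_one norm_p_pow_le_one hd
    exact ⟨mk a b d ha₀ hd₀, coords_mk a b d ha₀ hd₀⟩

lemma exists_congruenceSubgroup_le {H : Subgroup (BorelGL2 p)}
    (hH : IsOpen (H : Set (BorelGL2 p))) : ∃ n, congruenceSubgroup p n ≤ H := by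
  have hH₁ := hH.mem_nhds H.one_mem
  rw [isInducing_coords.nhds_eq_comap, Filter.mem_comap] at hH₁
  obtain ⟨S, hS, hSH⟩ := hH₁
  obtain ⟨ε, hε, hεS⟩ := Metric.mem_nhds_iff.1 hS
  obtain ⟨n, hn⟩ := ((tendsto_pow_atTop_nhds_zero_of_norm_lt_one Padic.norm_p_lt_one).eventually
    (ball_mem_nhds (0 : ℚ_[p]) hε)).exists
  refine ⟨n, fun g hg => hSH (hεS ?_)⟩
  have hg' : coords g ∈ ball (coords 1) ‖(p : ℚ_[p]) ^ n‖ := by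
    rwa [coords_one, ← ball_prod_same, ← ball_prod_same]
  exact ball_subset_ball (mem_ball_zero_iff.1 hn).le hg'

lemma conj_diag_mem_congruenceSubgroup {a : ℚ_[p]} (ha : a ≠ 0) (ha₁ : ‖a‖ ≤ 1) {n : ℕ}
    {g : BorelGL2 p} (hg : g ∈ congruenceSubgroup p n) :
    mk a 0 1 ha one_ne_zero * g * (mk a 0 1 ha one_ne_zero)⁻¹ ∈ congruenceSubgroup p n := by
  obtain ⟨hg₁, hg₂, hg₃⟩ := mem_congruenceSubgroup.1 hg
  rw [mem_congruenceSubgroup, coords_conj_diag]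
  exact ⟨hg₁, mul_mem_ball_zero_of_norm_le_one ha₁ hg₂, hg₃⟩

lemma conj_diag_unipotent_mem_congruenceSubgroup {a b : ℚ_[p]} (ha : a ≠ 0) {n : ℕ}
    (hab : a * b ∈ ball 0 ‖(p : ℚ_[p]) ^ n‖) :
    mk a 0 1 ha one_ne_zero * ⟨unipotentGL2 p b, unipotentGL2_mem_Borel p b⟩ *
      (mk a 0 1 ha one_ne_zero)⁻¹ ∈ congruenceSubgroup p n := by
  rw [mem_congruenceSubgroup, coords_conj_diag, coords_unipotent]
  exact ⟨mem_ball_self norm_p_pow_pos, hab, mem_ball_self norm_p_pow_pos⟩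

end BorelGL2

theorem unipotent_acts_trivially_on_smooth_admissible
    (k : Type*) [Field k]
    (V : Type*) [AddCommGroup V] [Module k V]
    (ρ : Representation k (BorelGL2 p) V)
    (hsmooth : ∀ v : V, ∃ H : Subgroup (BorelGL2 p),
      IsOpen (H : Set (BorelGL2 p)) ∧ ∀ g ∈ H, ρ g v = v)
    (hadm : ∀ H : Subgroup (BorelGL2 p),
      IsOpen (H : Set (BorelGL2 p)) → IsCompact (H : Set (BorelGL2 p)) →
      FiniteDimensional k (fixedVectors ρ H))
    (b : ℚ_[p]) (v : V) :
    ρ ⟨unipotentGL2 p b, unipotentGL2_mem_Borel p b⟩ v = v := by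
  open BorelGL2 in
  obtain ⟨H, hH, hHv⟩ := hsmooth v
  obtain ⟨n, hn⟩ := exists_congruenceSubgroup_le hH
  have := hadm _ (isOpen_congruenceSubgroup n) (isCompact_congruenceSubgroup n)
  obtain ⟨m, hm⟩ : ∃ m, (p : ℚ_[p]) ^ m * b ∈ ball 0 ‖(p : ℚ_[p]) ^ n‖ := by
    have h := (tendsto_pow_atTop_nhds_zero_of_norm_lt_one Padic.norm_p_lt_one).mul_const b
    rw [zero_mul] at h
    exact (h.eventually (ball_mem_nhds 0 norm_p_pow_pos)).exists
  have hpm : (p : ℚ_[p]) ^ m ≠ 0 := pow_ne_zero _ (NeZero.ne _)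
  exact apply_eq_self_of_conj_mem ρ
    (fun g hg => conj_diag_mem_congruenceSubgroup hpm norm_p_pow_le_one hg)
    (conj_diag_unipotent_mem_congruenceSubgroup hpm hm) fun g hg => hHv g (hn hg)
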